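/- arXiv:2106.12355 — 5 statements merged into one kernel-verified Lean document; each statement's English description precedes it below -/
import Mathlib

section
/- Let R be a commutative ring of characteristic 2 and let Ω be the 4k×4k block matrix Ω = (A, B, C, D; Bᵀ, Aᵀ, Dᵀ, Cᵀ; C, D, A, B; Dᵀ, Cᵀ, Bᵀ, Aᵀ) where A, B, C, D are k×k circulant matrices over R. Then Ω·Ωᵀ = I_{4k} if and only if AAᵀ + BBᵀ + CCᵀ + DDᵀ = I_k and ACᵀ + BDᵀ + CAᵀ + DBᵀ = 0. -/
/-!
Write `Ω = (M N; N M)` with `M = (A B; Bᵀ Aᵀ)` and `N = (C D; Dᵀ Cᵀ)`. Then `Ω Ωᵀ = 1` amounts to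
`M Mᵀ + N Nᵀ = 1` and `M Nᵀ + N Mᵀ = 0`. Since circulant matrices commute and their transposes are
circulant, blocks of the shape `(X Y; Yᵀ Xᵀ)` are closed under `(P, Q) ↦ P Qᵀ`:
`(A B; Bᵀ Aᵀ) (C D; Dᵀ Cᵀ)ᵀ = (X Y; Yᵀ Xᵀ)` with `X = ACᵀ + BDᵀ` and `Y = AD + CB`.
Summing, the off-diagonal parts become `2(AB + CD)` and `2(AD + CB)`, which vanish in
characteristic 2, leaving exactly the two stated conditions.
-/

open Matrix

/-- The cyclic right-shift permutation matrix `P = (0, I_{n-1}; 1, 0)`. -/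
def shiftP (n : ℕ) [NeZero n] (R : Type*) [CommRing R] : Matrix (Fin n) (Fin n) R :=
  Matrix.of fun i j => if j = i + 1 then (1 : R) else 0

/-- The circulant matrix `cir (b₀, …, b_{n-1})`, whose `(i, j)` entry is `b_{(j-i) mod n}`. -/
def cir {R : Type*} [CommRing R] {n : ℕ} (b : Fin n → R) : Matrix (Fin n) (Fin n) R :=
  Matrix.of fun i j => b (j - i)

namespace Matrix

variable {m n R : Type*}

def twinBlocks (A B : Matrix n n R) : Matrix (n ⊕ n) (n ⊕ n) R :=
  fromBlocks A B Bᵀ Aᵀ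

theorem fromBlocks_eq_twinBlocks (A B : Matrix n n R) : fromBlocks A B Bᵀ Aᵀ = twinBlocks A B :=
  rfl

theorem twinBlocks_add [Add R] (A B C D : Matrix n n R) :
    twinBlocks A B + twinBlocks C D = twinBlocks (A + C) (B + D) := by
  simp only [twinBlocks, fromBlocks_add, transpose_add]

theorem twinBlocks_eq_one_iff [DecidableEq n] [Zero R] [One R] {A B : Matrix n n R} :
    twinBlocks A B = 1 ↔ A = 1 ∧ B = 0 := by
  simp only [twinBlocks, ← fromBlocks_one, fromBlocks_inj, transpose_eq_one, transpose_eq_zero]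
  tauto

theorem twinBlocks_eq_zero_iff [Zero R] {A B : Matrix n n R} :
    twinBlocks A B = 0 ↔ A = 0 ∧ B = 0 := by
  simp only [twinBlocks, ← fromBlocks_zero, fromBlocks_inj, transpose_eq_zero]
  tauto

theorem twinBlocks_mul_transpose_twinBlocks [Fintype n] [CommSemiring R] {A B C D : Matrix n n R}
    (hBC : Commute B C) (hAD : Commute A D) (hAC : Commute Aᵀ C) (hBD : Commute Bᵀ D) :
    twinBlocks A B * (twinBlocks C D)ᵀ = twinBlocks (A * Cᵀ + B * Dᵀ) (A * D + C * B) := by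
  have hAD' : Aᵀ * Dᵀ = Dᵀ * Aᵀ := by rw [← transpose_mul, ← transpose_mul, hAD.eq]
  simp only [twinBlocks, fromBlocks_transpose, transpose_transpose, fromBlocks_multiply,
    transpose_add, transpose_mul, hBC.eq, hAD', hAC.eq, hBD.eq, add_comm]

theorem fromBlocks_self_mul_transpose_eq_one_iff [Fintype n] [DecidableEq m] [Semiring R]
    (M N : Matrix m n R) :
    fromBlocks M N N M * (fromBlocks M N N M)ᵀ = 1 ↔ M * Mᵀ + N * Nᵀ = 1 ∧ M * Nᵀ + N * Mᵀ = 0 := by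
  rw [fromBlocks_transpose, fromBlocks_multiply, ← fromBlocks_one, fromBlocks_inj,
    add_comm (N * Mᵀ), add_comm (N * Nᵀ)]
  tauto

theorem add_self_eq_zero_of_charTwo [Semiring R] [CharP R 2] (A : Matrix m n R) : A + A = 0 := by
  ext i j
  exact CharTwo.add_self_eq_zero (A i j)

end Matrix

section Circulant

variable {R : Type*} [CommRing R]

theorem cir_eq_circulant : ∀ {n : ℕ} (b : Fin n → R), cir b = circulant fun i => b (-i)
  | 0, _ => Subsingleton.elim _ _
  | _ + 1, b => by
    ext i j
    simp only [cir, circulant_apply, of_apply, neg_sub]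

theorem transpose_cir : ∀ {n : ℕ} (b : Fin n → R), (cir b)ᵀ = cir fun i => b (-i)
  | 0, _ => Subsingleton.elim _ _
  | _ + 1, b => by
    ext i j
    simp only [cir, transpose_apply, of_apply, neg_sub]

theorem commute_cir {n : ℕ} (u v : Fin n → R) : Commute (cir u) (cir v) := by
  rw [Commute, SemiconjBy, cir_eq_circulant, cir_eq_circulant]
  exact Fin.circulant_mul_comm _ _

theorem commute_transpose_cir {n : ℕ} (u v : Fin n → R) : Commute (cir u)ᵀ (cir v) := by
  rw [transpose_cir]
  exact commute_cir _ _

end Circulant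

/-- For `k×k` circulant matrices `A, B, C, D` over a commutative ring of characteristic 2,
the block matrix `Ω = (A B C D; Bᵀ Aᵀ Dᵀ Cᵀ; C D A B; Dᵀ Cᵀ Bᵀ Aᵀ)` satisfies `Ω Ωᵀ = I`
iff `AAᵀ + BBᵀ + CCᵀ + DDᵀ = I` and `ACᵀ + BDᵀ + CAᵀ + DBᵀ = 0`. -/
theorem omega_four_block_selfdual_iff {R : Type*} [CommRing R] [CharP R 2] {k : ℕ}
    (A B C D : Matrix (Fin k) (Fin k) R)
    (hA : ∃ a, A = cir a) (hB : ∃ b, B = cir b) (hC : ∃ c, C = cir c) (hD : ∃ d, D = cir d) :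
    (Matrix.fromBlocks
        (Matrix.fromBlocks A B Bᵀ Aᵀ) (Matrix.fromBlocks C D Dᵀ Cᵀ)
        (Matrix.fromBlocks C D Dᵀ Cᵀ) (Matrix.fromBlocks A B Bᵀ Aᵀ)) *
      (Matrix.fromBlocks
        (Matrix.fromBlocks A B Bᵀ Aᵀ) (Matrix.fromBlocks C D Dᵀ Cᵀ)
        (Matrix.fromBlocks C D Dᵀ Cᵀ) (Matrix.fromBlocks A B Bᵀ Aᵀ))ᵀ = 1 ↔
    (A * Aᵀ + B * Bᵀ + C * Cᵀ + D * Dᵀ = 1 ∧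
     A * Cᵀ + B * Dᵀ + C * Aᵀ + D * Bᵀ = 0) := by
  obtain ⟨a, rfl⟩ := hA
  obtain ⟨b, rfl⟩ := hB
  obtain ⟨c, rfl⟩ := hC
  obtain ⟨d, rfl⟩ := hD
  have hprod (u v u' v' : Fin k → R) := twinBlocks_mul_transpose_twinBlocks
    (commute_cir v u') (commute_cir u v') (commute_transpose_cir u u') (commute_transpose_cir v v')
  rw [fromBlocks_eq_twinBlocks, fromBlocks_eq_twinBlocks, fromBlocks_self_mul_transpose_eq_one_iff,
    hprod, hprod, hprod, hprod, twinBlocks_add, twinBlocks_add, twinBlocks_eq_one_iff,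
    twinBlocks_eq_zero_iff, add_comm (cir c * cir b)]
  simp only [add_self_eq_zero_of_charTwo, add_zero, and_true]
  simp only [add_assoc]
end

section
/- Let R be a commutative ring of characteristic 2, P the k×k cyclic right-shift permutation matrix, and X* = XP. Let A₁, A₂, B₁, B₂, C₁, C₂, D₁, D₂ be k×k circulant matrices over R and let Ω be the 4k×4k block matrix (A₁, A₂, B₁, B₂; A₂*, A₁, B₂*, B₁; C₁, C₂, D₁, D₂; C₂*, C₁, D₂*, D₁). Then Ω·Ωᵀ = I_{4k} if and only if: A₁A₁ᵀ + A₂A₂ᵀ + B₁B₁ᵀ + B₂B₂ᵀ = I_k, C₁C₁ᵀ + C₂C₂ᵀ + D₁D₁ᵀ + D₂D₂ᵀ = I_k, A₁(A₂*)ᵀ + A₂A₁ᵀ + B₁(B₂*)ᵀ + B₂B₁ᵀ = 0, A₁C₁ᵀ + A₂C₂ᵀ + B₁D₁ᵀ + B₂D₂ᵀ = 0, A₁(C₂*)ᵀ + A₂C₁ᵀ + B₁(D₂*)ᵀ + B₂D₁ᵀ = 0, and C₁(C₂*)ᵀ + C₂C₁ᵀ + D₁(D₂*)ᵀ + D₂D₁ᵀ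 = 0. -/
/-!
Write `S(M, N)` for the block `(M, N; N P, M)`, so that
`Ω = (S(A₁, A₂), S(B₁, B₂); S(C₁, C₂), S(D₁, D₂))`. Since `P` is orthogonal and commutes with
circulant matrices, `S(M, N) S(M', N')ᵀ` is again of the form `S(G, H)`, and such blocks add
blockwise. Hence each `2k × 2k` block of `Ω Ωᵀ` is some `S(G, H)`, which is `1` (resp. `0`)
exactly when `G = 1` (resp. `G = 0`) and `H = 0`. The lower left block of `Ω Ωᵀ` is the transpose
of the upper right one, which leaves the six stated conditions.
-/

open Matrix

section Circulant

variable {R : Type*} [CommRing R] {n : ℕ}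

lemma cir_eq_transpose_circulant (b : Fin n → R) : cir b = (circulant b)ᵀ := rfl

lemma cir_mul_comm (a b : Fin n → R) : cir a * cir b = cir b * cir a := by
  simp only [cir_eq_transpose_circulant, ← transpose_mul, Fin.circulant_mul_comm]

variable [NeZero n]

lemma shiftP_eq_permMatrix :
    shiftP n R = (Equiv.addRight 1 : Equiv.Perm (Fin n)).permMatrix R := by
  ext i j
  simp [shiftP, PEquiv.toMatrix_apply, eq_comm]

lemma shiftP_mul_transpose : shiftP n R * (shiftP n R)ᵀ = 1 := by
  rw [shiftP_eq_permMatrix, transpose_permMatrix, ← permMatrix_mul, inv_mul_cancel,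
    permMatrix_one]

lemma shiftP_eq_cir : shiftP n R = cir (Pi.single 1 1) := by
  ext i j
  simp [shiftP, cir, Pi.single_apply, sub_eq_iff_eq_add, add_comm]

lemma commute_cir_shiftP (a : Fin n → R) : Commute (cir a) (shiftP n R) := by
  rw [shiftP_eq_cir]
  exact cir_mul_comm _ _

end Circulant

section Blocks

variable {m n R : Type*} [Fintype m] [Fintype n] [DecidableEq m] [DecidableEq n] [CommSemiring R]

lemma fromBlocks_mul_transpose_self_eq_one_iff (X : Matrix m m R) (Y : Matrix m n R)
    (Z : Matrix n m R) (W : Matrix n n R) :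
    fromBlocks X Y Z W * (fromBlocks X Y Z W)ᵀ = 1 ↔
      X * Xᵀ + Y * Yᵀ = 1 ∧ X * Zᵀ + Y * Wᵀ = 0 ∧ Z * Zᵀ + W * Wᵀ = 1 := by
  have h_lower : Z * Xᵀ + W * Yᵀ = (X * Zᵀ + Y * Wᵀ)ᵀ := by
    simp only [transpose_add, transpose_mul, transpose_transpose]
  rw [fromBlocks_transpose, fromBlocks_multiply, ← fromBlocks_one, fromBlocks_inj, h_lower,
    transpose_eq_zero]
  tauto

end Blocks

section StarBlock

variable {n R : Type*} [Fintype n] [CommSemiring R]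

/-- The block pattern `(M, N; N*, M)` of `Ω`, where `N* = N P`. -/
def starBlock (P M N : Matrix n n R) : Matrix (n ⊕ n) (n ⊕ n) R :=
  fromBlocks M N (N * P) M

variable {P : Matrix n n R}

lemma fromBlocks_eq_starBlock (M N : Matrix n n R) :
    fromBlocks M N (N * P) M = starBlock P M N :=
  rfl

lemma starBlock_add (M N M' N' : Matrix n n R) :
    starBlock P M N + starBlock P M' N' = starBlock P (M + M') (N + N') := by
  simp only [starBlock, fromBlocks_add, add_mul]

variable [DecidableEq n]

lemma starBlock_eq_one_iff {M N : Matrix n n R} : starBlock P M N = 1 ↔ M = 1 ∧ N = 0 := by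
  rw [starBlock, ← fromBlocks_one, fromBlocks_inj]
  constructor
  · rintro ⟨hM, hN, -, -⟩
    exact ⟨hM, hN⟩
  · rintro ⟨rfl, rfl⟩
    simp

lemma starBlock_eq_zero_iff {M N : Matrix n n R} : starBlock P M N = 0 ↔ M = 0 ∧ N = 0 := by
  rw [starBlock, ← fromBlocks_zero, fromBlocks_inj]
  constructor
  · rintro ⟨hM, hN, -, -⟩
    exact ⟨hM, hN⟩
  · rintro ⟨rfl, rfl⟩
    simp

lemma commute_transpose_of_mul_transpose_eq_one (hP : P * Pᵀ = 1) {M : Matrix n n R}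
    (hM : Commute M P) : Commute Mᵀ P := by
  have hP' : Pᵀ * P = 1 := mul_eq_one_comm.mp hP
  have h : M * Pᵀ = Pᵀ * M :=
    calc M * Pᵀ = Pᵀ * (P * M) * Pᵀ := by rw [← mul_assoc, hP', one_mul]
      _ = Pᵀ * M := by rw [← hM.eq, mul_assoc, mul_assoc, hP, mul_one]
  show Mᵀ * P = P * Mᵀ
  simpa only [transpose_mul, transpose_transpose] using (congrArg transpose h).symm

lemma starBlock_mul_transpose (hP : P * Pᵀ = 1) (M N : Matrix n n R) {M' N' : Matrix n n R}
    (hM' : Commute M' P) (hN' : Commute N' P) :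
    starBlock P M N * (starBlock P M' N')ᵀ =
      starBlock P (M * M'ᵀ + N * N'ᵀ) (M * (N' * P)ᵀ + N * M'ᵀ) := by
  have hP' : Pᵀ * P = 1 := mul_eq_one_comm.mp hP
  have hM't := (commute_transpose_of_mul_transpose_eq_one hP hM').eq
  have hN't := (commute_transpose_of_mul_transpose_eq_one hP hN').eq
  simp only [starBlock, fromBlocks_transpose, fromBlocks_multiply]
  congr 1
  · rw [add_mul, transpose_mul, Matrix.mul_assoc M, Matrix.mul_assoc Pᵀ, hN't,
      ← Matrix.mul_assoc Pᵀ, hP', one_mul, Matrix.mul_assoc N M'ᵀ, hM't, ← Matrix.mul_assoc N,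
      add_comm]
  · rw [transpose_mul, Matrix.mul_assoc, ← Matrix.mul_assoc P, hP, one_mul, add_comm]

end StarBlock

theorem omega_star_selfdual_iff_general {R : Type*} [CommRing R] {k : ℕ} [NeZero k]
    (A₁ A₂ B₁ B₂ C₁ C₂ D₁ D₂ : Matrix (Fin k) (Fin k) R)
    (hA₁ : ∃ a, A₁ = cir a) (hA₂ : ∃ a, A₂ = cir a) (hB₁ : ∃ b, B₁ = cir b)
    (hB₂ : ∃ b, B₂ = cir b) (hC₁ : ∃ c, C₁ = cir c) (hC₂ : ∃ c, C₂ = cir c)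
    (hD₁ : ∃ d, D₁ = cir d) (hD₂ : ∃ d, D₂ = cir d) :
    (Matrix.fromBlocks
        (Matrix.fromBlocks A₁ A₂ (A₂ * shiftP k R) A₁)
        (Matrix.fromBlocks B₁ B₂ (B₂ * shiftP k R) B₁)
        (Matrix.fromBlocks C₁ C₂ (C₂ * shiftP k R) C₁)
        (Matrix.fromBlocks D₁ D₂ (D₂ * shiftP k R) D₁)) *
      (Matrix.fromBlocks
        (Matrix.fromBlocks A₁ A₂ (A₂ * shiftP k R) A₁)
        (Matrix.fromBlocks B₁ B₂ (B₂ * shiftP k R) B₁)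
        (Matrix.fromBlocks C₁ C₂ (C₂ * shiftP k R) C₁)
        (Matrix.fromBlocks D₁ D₂ (D₂ * shiftP k R) D₁))ᵀ = 1 ↔
    (A₁ * A₁ᵀ + A₂ * A₂ᵀ + B₁ * B₁ᵀ + B₂ * B₂ᵀ = 1 ∧
     C₁ * C₁ᵀ + C₂ * C₂ᵀ + D₁ * D₁ᵀ + D₂ * D₂ᵀ = 1 ∧
     A₁ * (A₂ * shiftP k R)ᵀ + A₂ * A₁ᵀ + B₁ * (B₂ * shiftP k R)ᵀ + B₂ * B₁ᵀ = 0 ∧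
     A₁ * C₁ᵀ + A₂ * C₂ᵀ + B₁ * D₁ᵀ + B₂ * D₂ᵀ = 0 ∧
     A₁ * (C₂ * shiftP k R)ᵀ + A₂ * C₁ᵀ + B₁ * (D₂ * shiftP k R)ᵀ + B₂ * D₁ᵀ = 0 ∧
     C₁ * (C₂ * shiftP k R)ᵀ + C₂ * C₁ᵀ + D₁ * (D₂ * shiftP k R)ᵀ + D₂ * D₁ᵀ = 0) := by
  have hP : shiftP k R * (shiftP k R)ᵀ = 1 := shiftP_mul_transpose
  have hcomm {M : Matrix (Fin k) (Fin k) R} (hM : ∃ a, M = cir a) : Commute M (shiftP k R) := by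
    obtain ⟨a, rfl⟩ := hM
    exact commute_cir_shiftP a
  simp only [fromBlocks_eq_starBlock, fromBlocks_mul_transpose_self_eq_one_iff,
    starBlock_mul_transpose hP _ _ (hcomm hA₁) (hcomm hA₂),
    starBlock_mul_transpose hP _ _ (hcomm hB₁) (hcomm hB₂),
    starBlock_mul_transpose hP _ _ (hcomm hC₁) (hcomm hC₂),
    starBlock_mul_transpose hP _ _ (hcomm hD₁) (hcomm hD₂),
    starBlock_add, starBlock_eq_one_iff, starBlock_eq_zero_iff, ← add_assoc]
  tauto

/-- For `k×k` circulant matrices `A₁, A₂, B₁, B₂, C₁, C₂, D₁, D₂` over a commutative ring of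
characteristic 2, with `X* = X * P` for the cyclic permutation matrix `P`, the block matrix
`Ω = (A₁ A₂ B₁ B₂; A₂* A₁ B₂* B₁; C₁ C₂ D₁ D₂; C₂* C₁ D₂* D₁)` satisfies `Ω Ωᵀ = I`
iff the six stated conditions hold. -/
theorem omega_star_selfdual_iff {R : Type*} [CommRing R] [CharP R 2] {k : ℕ} [NeZero k]
    (A₁ A₂ B₁ B₂ C₁ C₂ D₁ D₂ : Matrix (Fin k) (Fin k) R)
    (hA₁ : ∃ a, A₁ = cir a) (hA₂ : ∃ a, A₂ = cir a) (hB₁ : ∃ b, B₁ = cir b)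
    (hB₂ : ∃ b, B₂ = cir b) (hC₁ : ∃ c, C₁ = cir c) (hC₂ : ∃ c, C₂ = cir c)
    (hD₁ : ∃ d, D₁ = cir d) (hD₂ : ∃ d, D₂ = cir d) :
    (Matrix.fromBlocks
        (Matrix.fromBlocks A₁ A₂ (A₂ * shiftP k R) A₁)
        (Matrix.fromBlocks B₁ B₂ (B₂ * shiftP k R) B₁)
        (Matrix.fromBlocks C₁ C₂ (C₂ * shiftP k R) C₁)
        (Matrix.fromBlocks D₁ D₂ (D₂ * shiftP k R) D₁)) *
      (Matrix.fromBlocks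
        (Matrix.fromBlocks A₁ A₂ (A₂ * shiftP k R) A₁)
        (Matrix.fromBlocks B₁ B₂ (B₂ * shiftP k R) B₁)
        (Matrix.fromBlocks C₁ C₂ (C₂ * shiftP k R) C₁)
        (Matrix.fromBlocks D₁ D₂ (D₂ * shiftP k R) D₁))ᵀ = 1 ↔
    (A₁ * A₁ᵀ + A₂ * A₂ᵀ + B₁ * B₁ᵀ + B₂ * B₂ᵀ = 1 ∧
     C₁ * C₁ᵀ + C₂ * C₂ᵀ + D₁ * D₁ᵀ + D₂ * D₂ᵀ = 1 ∧
     A₁ * (A₂ * shiftP k R)ᵀ + A₂ * A₁ᵀ + B₁ * (B₂ * shiftP k R)ᵀ + B₂ * B₁ᵀ = 0 ∧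
     A₁ * C₁ᵀ + A₂ * C₂ᵀ + B₁ * D₁ᵀ + B₂ * D₂ᵀ = 0 ∧
     A₁ * (C₂ * shiftP k R)ᵀ + A₂ * C₁ᵀ + B₁ * (D₂ * shiftP k R)ᵀ + B₂ * D₁ᵀ = 0 ∧
     C₁ * (C₂ * shiftP k R)ᵀ + C₂ * C₁ᵀ + D₁ * (D₂ * shiftP k R)ᵀ + D₂ * D₁ᵀ = 0) :=
  omega_star_selfdual_iff_general A₁ A₂ B₁ B₂ C₁ C₂ D₁ D₂ hA₁ hA₂ hB₁ hB₂ hC₁ hC₂ hD₁ hD₂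
end

section
/- Let R be a commutative Frobenius ring and let Ω be an n×n matrix over R satisfying Ω·Ωᵀ = −I_n. Then the row space of the n×2n matrix G = (I_n | Ω) is a self-dual code of length 2n over R, i.e. the R-submodule of R^{2n} generated by the rows of G equals its own dual under the Euclidean inner product. -/
open Matrix

/-- The (Euclidean) dual of a code `C ⊆ R^ι`:
`C^⊥ = {x | ⟨x, y⟩ = 0 for all y ∈ C}` where `⟨x, y⟩ = ∑ i, x i * y i`. -/
def euclideanDual {R : Type*} [CommRing R] {ι : Type*} [Fintype ι]
    (C : Submodule R (ι → R)) : Submodule R (ι → R) where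
  carrier := {x | ∀ y ∈ C, ∑ i, x i * y i = 0}
  add_mem' := by
    intro a b ha hb y hy
    simp [add_mul, Finset.sum_add_distrib, ha y hy, hb y hy]
  zero_mem' := by intro y hy; simp
  smul_mem' := by
    intro c x hx y hy
    simp [smul_eq_mul, mul_assoc, ← Finset.mul_sum, hx y hy]

/-!
The row space `C` of `G = (1 | Ω)` is self-orthogonal because `G Gᵀ = 1 + Ω Ωᵀ = 0`. Conversely,
`x ∈ C^⊥` means `G x = 0`, i.e. `x = (-Ω y, y)`, so `C^⊥` is the row space of the parity-check
matrix `(-Ωᵀ | 1)`. Since `Ω` is square, `Ω Ωᵀ = -1` also gives `-Ωᵀ Ω = 1`, hence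
`(-Ωᵀ | 1) = -Ωᵀ G` and `C^⊥ ⊆ C`.
-/

namespace Matrix

open Submodule Set

variable {R : Type*} [CommRing R] {l m k ι : Type*}

theorem fromCols_one_mul_transpose [Fintype m] [DecidableEq m] [Fintype k] (Ω : Matrix m k R) :
    fromCols (1 : Matrix m m R) Ω * (fromCols (1 : Matrix m m R) Ω)ᵀ = 1 + Ω * Ωᵀ := by
  rw [transpose_fromCols, fromCols_mul_fromRows, transpose_one, one_mul]

theorem span_rows_mul_le [Fintype l] [Fintype m] (A : Matrix l m R) (M : Matrix m ι R) :
    span R (range (A * M).row) ≤ span R (range M.row) := by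
  rw [← range_vecMulLinear, ← range_vecMulLinear]
  rintro _ ⟨y, rfl⟩
  exact ⟨y ᵥ* A, by simp [vecMul_vecMul]⟩

variable [Fintype ι]

theorem mem_euclideanDual_span_iff {s : Set (ι → R)} {x : ι → R} :
    x ∈ euclideanDual (span R s) ↔ ∀ y ∈ s, x ⬝ᵥ y = 0 := by
  refine ⟨fun h y hy => h y (subset_span hy), fun h y hy => ?_⟩
  exact (span_le (p := LinearMap.ker (dotProductBilin R R x)).2 h) hy

theorem mem_euclideanDual_span_rows_iff (M : Matrix m ι R) {x : ι → R} :
    x ∈ euclideanDual (span R (range M.row)) ↔ M *ᵥ x = 0 := by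
  simp only [mem_euclideanDual_span_iff, forall_mem_range, funext_iff, row_def]
  exact forall_congr' fun i => by rw [dotProduct_comm]; rfl

theorem span_rows_le_euclideanDual_iff (M : Matrix m ι R) :
    span R (range M.row) ≤ euclideanDual (span R (range M.row)) ↔ M * Mᵀ = 0 := by
  simp only [span_le, range_subset_iff, SetLike.mem_coe, mem_euclideanDual_span_rows_iff,
    ← Matrix.ext_iff, funext_iff]
  exact forall_comm

theorem euclideanDual_span_rows_fromCols_one [Fintype m] [DecidableEq m] [Fintype k]
    [DecidableEq k] (Ω : Matrix m k R) :
    euclideanDual (span R (range (fromCols 1 Ω).row)) =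
      span R (range (fromCols (-Ωᵀ) (1 : Matrix k k R)).row) := by
  ext x
  rw [mem_euclideanDual_span_rows_iff, ← range_vecMulLinear, LinearMap.mem_range]
  simp only [vecMulLinear_apply, vecMul_fromCols, fromCols_mulVec, one_mulVec, vecMul_one,
    vecMul_neg, vecMul_transpose]
  constructor
  · intro h
    refine ⟨x ∘ Sum.inr, ?_⟩
    ext (i | i)
    · simp [eq_neg_of_add_eq_zero_right h]
    · rfl
  · rintro ⟨y, rfl⟩
    simp

end Matrix

theorem span_rows_fromColumns_one_self_dual_general {R : Type*} [CommRing R] {n : ℕ}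
    (Ω : Matrix (Fin n) (Fin n) R) (hΩ : Ω * Ωᵀ = -1) :
    Submodule.span R (Set.range fun i => Matrix.fromCols (1 : Matrix (Fin n) (Fin n) R) Ω i) =
      euclideanDual
        (Submodule.span R
          (Set.range fun i => Matrix.fromCols (1 : Matrix (Fin n) (Fin n) R) Ω i)) := by
  rw [← row_def]
  have hΩ' : -Ωᵀ * Ω = 1 := mul_eq_one_comm.mp (by rw [mul_neg, hΩ, neg_neg])
  refine le_antisymm ((span_rows_le_euclideanDual_iff _).2 ?_) ?_
  · rw [fromCols_one_mul_transpose, hΩ, add_neg_cancel]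
  · have hparity : fromCols (-Ωᵀ) 1 = -Ωᵀ * fromCols 1 Ω := by rw [mul_fromCols, mul_one, hΩ']
    rw [euclideanDual_span_rows_fromCols_one, hparity]
    exact span_rows_mul_le _ _

/-- If `R` is a finite commutative Frobenius ring (finite, commutative and self-injective)
and `Ω` is an `n×n` matrix with `Ω Ωᵀ = -I`, then the code generated by the rows of
`G = (I_n | Ω)` is self-dual: it equals its own Euclidean dual. -/
theorem span_rows_fromColumns_one_self_dual {R : Type*} [CommRing R] [Fintype R]
    (hFrob : Module.Injective R R) {n : ℕ} (Ω : Matrix (Fin n) (Fin n) R)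
    (hΩ : Ω * Ωᵀ = -1) :
    Submodule.span R (Set.range fun i => Matrix.fromCols (1 : Matrix (Fin n) (Fin n) R) Ω i) =
      euclideanDual
        (Submodule.span R
          (Set.range fun i => Matrix.fromCols (1 : Matrix (Fin n) (Fin n) R) Ω i)) :=
  span_rows_fromColumns_one_self_dual_general Ω hΩ
end

section
/- The Gray map φ : (F₂ + uF₂)ⁿ → F₂^{2n} defined coordinatewise by a + bu ↦ (b, a + b) preserves orthogonality: if x, y ∈ (F₂+uF₂)ⁿ satisfy ⟨x, y⟩ = 0 (Euclidean inner product over F₂+uF₂), and moreover ⟨x, x⟩ = ⟨y, y⟩ = 0, then ⟨φ(x), φ(y)⟩ = 0 in F₂^{2n}. In particular, if C is a self-orthogonal linear code over F₂+uF₂, then φ(C) is a self-orthogonal binary code. -/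
/-!
Writing a coordinate of `x` as `a + bu` and of `y` as `c + du`, the Gray images contribute
`bd + (a + b)(c + d) = ac + (ad + bc)` in characteristic two, while `xy = ac + (ad + bc)u`.
Hence `⟨φ(x), φ(y)⟩` is the sum of the two components of `⟨x, y⟩`, and vanishes with it.
-/

/-- The Gray map `φ : (F₂ + uF₂)ⁿ → F₂^{2n}`, acting coordinatewise by
`a + bu ↦ (b, a + b)`.  Here `F₂ + uF₂ = F₂[u]/(u²)` is modelled as
`DualNumber (ZMod 2)`, whose elements are pairs `a + b·ε` with `ε² = 0`. -/
def grayMap {n : ℕ} (x : Fin n → DualNumber (ZMod 2)) : (Fin n ⊕ Fin n) → ZMod 2 :=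
  Sum.elim (fun i => (x i).snd) (fun i => (x i).fst + (x i).snd)

namespace DualNumber

variable {R : Type*} [CommRing R] [CharP R 2]

theorem fst_mul_add_snd_mul (z w : DualNumber R) :
    (z * w).fst + (z * w).snd = z.snd * w.snd + (z.fst + z.snd) * (w.fst + w.snd) := by
  rw [TrivSqZeroExt.fst_mul, snd_mul]
  linear_combination (-(z.snd * w.snd)) * CharTwo.two_eq_zero (R := R)

end DualNumber

theorem grayMap_dotProduct {n : ℕ} (x y : Fin n → DualNumber (ZMod 2)) :
    ∑ j, grayMap x j * grayMap y j = (∑ i, x i * y i).fst + (∑ i, x i * y i).snd := by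
  simp only [grayMap, Fintype.sum_sum_type, Sum.elim_inl, Sum.elim_inr, TrivSqZeroExt.fst_sum,
    TrivSqZeroExt.snd_sum, ← Finset.sum_add_distrib, DualNumber.fst_mul_add_snd_mul]

theorem grayMap_dotProduct_eq_zero {n : ℕ} {x y : Fin n → DualNumber (ZMod 2)}
    (h : ∑ i, x i * y i = 0) : ∑ j, grayMap x j * grayMap y j = 0 := by
  rw [grayMap_dotProduct, h, TrivSqZeroExt.fst_zero, TrivSqZeroExt.snd_zero, add_zero]

/-- The Gray map `φ : (F₂+uF₂)ⁿ → F₂^{2n}`, `a + bu ↦ (b, a+b)`, preserves orthogonality: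
if `⟨x, y⟩ = 0`, `⟨x, x⟩ = 0` and `⟨y, y⟩ = 0` then `⟨φ(x), φ(y)⟩ = 0`.  In particular, if
`C` is a self-orthogonal linear code over `F₂+uF₂`, then `φ(C)` is a self-orthogonal binary
code. -/
theorem grayMap_preserves_orthogonality (n : ℕ) :
    (∀ x y : Fin n → DualNumber (ZMod 2),
        (∑ i, x i * y i = 0) → (∑ i, x i * x i = 0) → (∑ i, y i * y i = 0) →
        ∑ j, grayMap x j * grayMap y j = 0) ∧
    (∀ C : Submodule (DualNumber (ZMod 2)) (Fin n → DualNumber (ZMod 2)),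
        (∀ x ∈ C, ∀ y ∈ C, ∑ i, x i * y i = 0) →
        ∀ x ∈ C, ∀ y ∈ C, ∑ j, grayMap x j * grayMap y j = 0) :=
  ⟨fun _ _ hxy _ _ => grayMap_dotProduct_eq_zero hxy,
    fun _ hC x hx y hy => grayMap_dotProduct_eq_zero (hC x hx y hy)⟩
end

section
/- Let R be a commutative ring of characteristic 2 and let A₁, A₂, A₃, B₁, B₂, B₃, C₁, C₂, C₃, D₁, D₂, D₃ be k×k circulant matrices over R. Let Ω be the 6k×6k block matrix (CIR(A₁,A₂,A₃), CIR(B₁,B₂,B₃); CIR(C₁,C₂,C₃), CIR(D₁,D₂,D₃)), where CIR(X₁,X₂,X₃) is the block circulant matrix (X₁,X₂,X₃; X₃,X₁,X₂; X₂,X₃,X₁). Then Ω·Ωᵀ = I_{6k} if and only if: A₁A₁ᵀ+A₂A₂ᵀ+A₃A₃ᵀ+B₁B₁ᵀ+B₂B₂ᵀ+B₃B₃ᵀ = I_k, C₁C₁ᵀ+C₂C₂ᵀ+C₃C₃ᵀ+D₁D₁ᵀ+D₂D₂ᵀ+D₃D₃ᵀ = I_k, A₁A₃ᵀ+A₂A₁ᵀ+A₃A₂ᵀ+B₁B₃ᵀ+B₂B₁ᵀ+B₃B₂ᵀ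 = 0, A₁C₁ᵀ+A₂C₂ᵀ+A₃C₃ᵀ+B₁D₁ᵀ+B₂D₂ᵀ+B₃D₃ᵀ = 0, A₁C₃ᵀ+A₂C₁ᵀ+A₃C₂ᵀ+B₁D₃ᵀ+B₂D₁ᵀ+B₃D₂ᵀ = 0, A₁C₂ᵀ+A₂C₃ᵀ+A₃C₁ᵀ+B₁D₂ᵀ+B₂D₃ᵀ+B₃D₁ᵀ = 0, and C₁C₃ᵀ+C₂C₁ᵀ+C₃C₂ᵀ+D₁D₃ᵀ+D₂D₁ᵀ+D₃D₂ᵀ = 0. -/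
open Matrix

/-- The 3×3 block circulant matrix `CIR(X₁, X₂, X₃) = (X₁ X₂ X₃; X₃ X₁ X₂; X₂ X₃ X₁)`
built from `k×k` blocks. -/
def blockCir3 {R : Type*} [CommRing R] {k : ℕ} (X : Fin 3 → Matrix (Fin k) (Fin k) R) :
    Matrix (Fin 3 × Fin k) (Fin 3 × Fin k) R :=
  Matrix.of fun p q => X (q.1 - p.1) p.2 q.2

/-!
Since `Ω Ωᵀ` is symmetric, it suffices to check the two diagonal blocks and one off-diagonal
block. Each block of `Ω Ωᵀ` is again block circulant, its first block row being the cyclic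
correlation `d ↦ ∑ₘ Xₘ Y_{m-d}ᵀ` of two block rows of `Ω`. For a diagonal block the correlation at
`d = 2` is the transpose of the one at `d = 1`, which leaves seven conditions.
-/

section FromBlocks

variable {l m n o α : Type*} [Fintype n] [Fintype o] [DecidableEq l] [DecidableEq m]
  [CommRing α]

theorem fromBlocks_mul_transpose_self_eq_one_iff_s18 (P : Matrix l n α) (Q : Matrix l o α)
    (R : Matrix m n α) (S : Matrix m o α) :
    fromBlocks P Q R S * (fromBlocks P Q R S)ᵀ = 1 ↔
      P * Pᵀ + Q * Qᵀ = 1 ∧ R * Rᵀ + S * Sᵀ = 1 ∧ P * Rᵀ + Q * Sᵀ = 0 := by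
  have h_lower : R * Pᵀ + S * Qᵀ = (P * Rᵀ + Q * Sᵀ)ᵀ := by
    simp only [transpose_add, transpose_mul, transpose_transpose]
  rw [fromBlocks_transpose, fromBlocks_multiply, ← fromBlocks_one, fromBlocks_inj, h_lower,
    transpose_eq_zero]
  tauto

end FromBlocks

section CyclicCorr

variable {G ι α : Type*} [AddCommGroup G] [Fintype G] [Fintype ι] [CommRing α]

def cyclicCorr (X Y : G → Matrix ι ι α) (d : G) : Matrix ι ι α :=
  ∑ m, X m * (Y (m - d))ᵀ

theorem transpose_cyclicCorr (X Y : G → Matrix ι ι α) (d : G) :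
    (cyclicCorr X Y d)ᵀ = cyclicCorr Y X (-d) := by
  simp only [cyclicCorr, transpose_sum, transpose_mul, transpose_transpose, sub_neg_eq_add]
  exact Fintype.sum_equiv (Equiv.subRight d) _ _ fun m => by simp

theorem transpose_cyclicCorr_self_add (X Y : G → Matrix ι ι α) (d : G) :
    ((cyclicCorr X X + cyclicCorr Y Y) d)ᵀ = (cyclicCorr X X + cyclicCorr Y Y) (-d) := by
  simp only [Pi.add_apply, transpose_add, transpose_cyclicCorr]

end CyclicCorr

section BlockCir3

variable {R : Type*} [CommRing R] {k : ℕ}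

theorem blockCir3_mul_transpose (X Y : Fin 3 → Matrix (Fin k) (Fin k) R) :
    blockCir3 X * (blockCir3 Y)ᵀ = blockCir3 (cyclicCorr X Y) := by
  ext p q
  simp only [blockCir3, cyclicCorr, mul_apply, transpose_apply, of_apply, Matrix.sum_apply,
    Fintype.sum_prod_type]
  exact Fintype.sum_equiv (Equiv.subRight p.1) _ _ fun m => by
    simp only [Equiv.subRight_apply, sub_sub_sub_cancel_right]

theorem blockCir3_add (X Y : Fin 3 → Matrix (Fin k) (Fin k) R) :
    blockCir3 X + blockCir3 Y = blockCir3 (X + Y) := by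
  ext p q
  simp [blockCir3]

theorem blockCir3_injective : Function.Injective (blockCir3 (R := R) (k := k)) := by
  intro X Y h
  ext d i j
  simpa [blockCir3] using congrFun (congrFun h (0, i)) (d, j)

theorem blockCir3_zero : blockCir3 (0 : Fin 3 → Matrix (Fin k) (Fin k) R) = 0 := by
  ext p q
  simp [blockCir3]

theorem blockCir3_single_zero_one :
    blockCir3 (Pi.single 0 (1 : Matrix (Fin k) (Fin k) R)) = 1 := by
  ext ⟨a, i⟩ ⟨b, j⟩
  rcases eq_or_ne a b with rfl | hab
  · simp [blockCir3, one_apply]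
  · simp [blockCir3, one_apply, hab, sub_eq_zero, Ne.symm hab]

theorem blockCir3_eq_zero_iff {X : Fin 3 → Matrix (Fin k) (Fin k) R} :
    blockCir3 X = 0 ↔ X 0 = 0 ∧ X 1 = 0 ∧ X 2 = 0 := by
  rw [← blockCir3_zero, blockCir3_injective.eq_iff, funext_iff, Fin.forall_fin_succ,
    Fin.forall_fin_two]
  rfl

theorem blockCir3_eq_one_iff {X : Fin 3 → Matrix (Fin k) (Fin k) R} :
    blockCir3 X = 1 ↔ X 0 = 1 ∧ X 1 = 0 ∧ X 2 = 0 := by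
  rw [← blockCir3_single_zero_one, blockCir3_injective.eq_iff, funext_iff, Fin.forall_fin_succ,
    Fin.forall_fin_two]
  simp

theorem blockCir3_eq_one_iff_of_transpose {X : Fin 3 → Matrix (Fin k) (Fin k) R}
    (hX : ∀ d, (X d)ᵀ = X (-d)) : blockCir3 X = 1 ↔ X 0 = 1 ∧ X 1 = 0 := by
  have h2 : X 2 = (X 1)ᵀ := by rw [hX]; rfl
  rw [blockCir3_eq_one_iff, h2, transpose_eq_zero, and_self]

end BlockCir3

theorem omega_blockCir3_selfdual_iff_general {R : Type*} [CommRing R] {k : ℕ}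
    (A₁ A₂ A₃ B₁ B₂ B₃ C₁ C₂ C₃ D₁ D₂ D₃ : Matrix (Fin k) (Fin k) R) :
    (Matrix.fromBlocks (blockCir3 ![A₁, A₂, A₃]) (blockCir3 ![B₁, B₂, B₃])
        (blockCir3 ![C₁, C₂, C₃]) (blockCir3 ![D₁, D₂, D₃])) *
      (Matrix.fromBlocks (blockCir3 ![A₁, A₂, A₃]) (blockCir3 ![B₁, B₂, B₃])
        (blockCir3 ![C₁, C₂, C₃]) (blockCir3 ![D₁, D₂, D₃]))ᵀ = 1 ↔
    (A₁ * A₁ᵀ + A₂ * A₂ᵀ + A₃ * A₃ᵀ + B₁ * B₁ᵀ + B₂ * B₂ᵀ + B₃ * B₃ᵀ = 1 ∧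
     C₁ * C₁ᵀ + C₂ * C₂ᵀ + C₃ * C₃ᵀ + D₁ * D₁ᵀ + D₂ * D₂ᵀ + D₃ * D₃ᵀ = 1 ∧
     A₁ * A₃ᵀ + A₂ * A₁ᵀ + A₃ * A₂ᵀ + B₁ * B₃ᵀ + B₂ * B₁ᵀ + B₃ * B₂ᵀ = 0 ∧
     A₁ * C₁ᵀ + A₂ * C₂ᵀ + A₃ * C₃ᵀ + B₁ * D₁ᵀ + B₂ * D₂ᵀ + B₃ * D₃ᵀ = 0 ∧
     A₁ * C₃ᵀ + A₂ * C₁ᵀ + A₃ * C₂ᵀ + B₁ * D₃ᵀ + B₂ * D₁ᵀ + B₃ * D₂ᵀ = 0 ∧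
     A₁ * C₂ᵀ + A₂ * C₃ᵀ + A₃ * C₁ᵀ + B₁ * D₂ᵀ + B₂ * D₃ᵀ + B₃ * D₁ᵀ = 0 ∧
     C₁ * C₃ᵀ + C₂ * C₁ᵀ + C₃ * C₂ᵀ + D₁ * D₃ᵀ + D₂ * D₁ᵀ + D₃ * D₂ᵀ = 0) := by
  rw [fromBlocks_mul_transpose_self_eq_one_iff_s18]
  simp only [blockCir3_mul_transpose, blockCir3_add]
  rw [blockCir3_eq_one_iff_of_transpose (transpose_cyclicCorr_self_add _ _),
    blockCir3_eq_one_iff_of_transpose (transpose_cyclicCorr_self_add _ _), blockCir3_eq_zero_iff]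
  simp only [Pi.add_apply, cyclicCorr, Fin.sum_univ_three, Fin.isValue, Fin.reduceSub, sub_zero,
    zero_sub, sub_self, cons_val_zero, cons_val_one, cons_val, add_assoc]
  tauto

/-- Theorem 3.3 (length 84 construction): for `k×k` circulant matrices `Aᵢ, Bᵢ, Cᵢ, Dᵢ`
(`i = 1, 2, 3`) over a commutative ring of characteristic 2, the block matrix
`Ω = (CIR(A₁,A₂,A₃), CIR(B₁,B₂,B₃); CIR(C₁,C₂,C₃), CIR(D₁,D₂,D₃))` satisfies `Ω Ωᵀ = I`
iff the seven stated conditions hold. -/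
theorem omega_blockCir3_selfdual_iff {R : Type*} [CommRing R] [CharP R 2] {k : ℕ}
    (A₁ A₂ A₃ B₁ B₂ B₃ C₁ C₂ C₃ D₁ D₂ D₃ : Matrix (Fin k) (Fin k) R)
    (hA₁ : ∃ a, A₁ = cir a) (hA₂ : ∃ a, A₂ = cir a) (hA₃ : ∃ a, A₃ = cir a)
    (hB₁ : ∃ b, B₁ = cir b) (hB₂ : ∃ b, B₂ = cir b) (hB₃ : ∃ b, B₃ = cir b)
    (hC₁ : ∃ c, C₁ = cir c) (hC₂ : ∃ c, C₂ = cir c) (hC₃ : ∃ c, C₃ = cir c)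
    (hD₁ : ∃ d, D₁ = cir d) (hD₂ : ∃ d, D₂ = cir d) (hD₃ : ∃ d, D₃ = cir d) :
    (Matrix.fromBlocks (blockCir3 ![A₁, A₂, A₃]) (blockCir3 ![B₁, B₂, B₃])
        (blockCir3 ![C₁, C₂, C₃]) (blockCir3 ![D₁, D₂, D₃])) *
      (Matrix.fromBlocks (blockCir3 ![A₁, A₂, A₃]) (blockCir3 ![B₁, B₂, B₃])
        (blockCir3 ![C₁, C₂, C₃]) (blockCir3 ![D₁, D₂, D₃]))ᵀ = 1 ↔
    (A₁ * A₁ᵀ + A₂ * A₂ᵀ + A₃ * A₃ᵀ + B₁ * B₁ᵀ + B₂ * B₂ᵀ + B₃ * B₃ᵀ = 1 ∧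
     C₁ * C₁ᵀ + C₂ * C₂ᵀ + C₃ * C₃ᵀ + D₁ * D₁ᵀ + D₂ * D₂ᵀ + D₃ * D₃ᵀ = 1 ∧
     A₁ * A₃ᵀ + A₂ * A₁ᵀ + A₃ * A₂ᵀ + B₁ * B₃ᵀ + B₂ * B₁ᵀ + B₃ * B₂ᵀ = 0 ∧
     A₁ * C₁ᵀ + A₂ * C₂ᵀ + A₃ * C₃ᵀ + B₁ * D₁ᵀ + B₂ * D₂ᵀ + B₃ * D₃ᵀ = 0 ∧
     A₁ * C₃ᵀ + A₂ * C₁ᵀ + A₃ * C₂ᵀ + B₁ * D₃ᵀ + B₂ * D₁ᵀ + B₃ * D₂ᵀ = 0 ∧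
     A₁ * C₂ᵀ + A₂ * C₃ᵀ + A₃ * C₁ᵀ + B₁ * D₂ᵀ + B₂ * D₃ᵀ + B₃ * D₁ᵀ = 0 ∧
     C₁ * C₃ᵀ + C₂ * C₁ᵀ + C₃ * C₂ᵀ + D₁ * D₃ᵀ + D₂ * D₁ᵀ + D₃ * D₂ᵀ = 0) :=
  omega_blockCir3_selfdual_iff_general A₁ A₂ A₃ B₁ B₂ B₃ C₁ C₂ C₃ D₁ D₂ D₃
end
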